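/- Let m be a positive even integer and let ξ_m = (√(m²+4) − m)/2 be the fractional part of the noble mean with constant continued fraction expansion [0; m, m, m, ...]. Then S_n(2·ξ_m) ≥ 0 for every integer n ≥ 0. -/

import Mathlib

/-- The deterministic random walk `S_n(ξ) = ∑_{j=1}^n (-1)^⌊j·ξ⌋`. -/
noncomputable def S (ξ : ℝ) (n : ℕ) : ℤ :=
  ∑ j ∈ Finset.Icc 1 n, ((Int.negOnePow ⌊(j : ℝ) * ξ⌋ : ℤˣ) : ℤ)

/-!
With `ξ⁻¹ = a + ξ / 4` (`a = m / 2`), the walk is a succession of runs of constant sign: on the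
`k`-th run `⌊j ξ⌋ = k`, and its length is `a + ⌊(k + 1) ξ / 4⌋ - ⌊k ξ / 4⌋`. Every `S_n` is at
least the value at the end of some even-numbered run `2t`. There the `a`'s cancel, leaving the
alternating sum of the increments of `⌊k ξ / 4⌋`; read through the run decomposition for the
slope `(ξ / 4)⁻¹ = ξ + 4a`, that sum is `S_{⌊2t ξ / 4⌋}(ξ + 4a) = S_{⌊2t ξ / 4⌋}(ξ)`. Since
`⌊2t ξ / 4⌋ < n`, strong induction on `n` gives `S_n ≥ 0`.
-/

open Finset

lemma S_eq_add_sum_Ioc (ξ : ℝ) {N n : ℕ} (h : N ≤ n) :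
    S ξ n = S ξ N + ∑ j ∈ Ioc N n, ((Int.negOnePow ⌊(j : ℝ) * ξ⌋ : ℤˣ) : ℤ) := by
  have hIcc (k : ℕ) : Icc 1 k = Ioc 0 k := Icc_add_one_left_eq_Ioc 0 k
  rw [S, S, hIcc, hIcc, sum_Ioc_consecutive _ N.zero_le h]

lemma S_eq_add_of_floor_eq (ξ : ℝ) {N n : ℕ} (h : N ≤ n) {k : ℤ}
    (hk : ∀ j ∈ Ioc N n, ⌊(j : ℝ) * ξ⌋ = k) :
    S ξ n = S ξ N + k.negOnePow * (n - N : ℕ) := by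
  rw [S_eq_add_sum_Ioc ξ h, sum_congr rfl fun j hj => by rw [hk j hj], sum_const, Nat.card_Ioc,
    nsmul_eq_mul, mul_comm]

lemma S_add_two_mul_intCast (ξ : ℝ) (a : ℤ) (n : ℕ) : S (ξ + 2 * a) n = S ξ n := by
  refine sum_congr rfl fun j _ => ?_
  have hsplit : (j : ℝ) * (ξ + 2 * a) = (j : ℝ) * ξ + ((2 * (j * a) : ℤ) : ℝ) := by push_cast; ring
  rw [hsplit, Int.floor_add_intCast, Int.negOnePow_add, Int.negOnePow_even _ (even_two_mul _),
    mul_one]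

lemma le_floor_mul_iff_floor_mul_inv_lt {ξ : ℝ} (hξ : Irrational ξ) (hξ0 : 0 < ξ) (K : ℕ) {j : ℕ}
    (hj : 0 < j) :
    (K : ℤ) ≤ ⌊(j : ℝ) * ξ⌋ ↔ ⌊(K : ℝ) * ξ⁻¹⌋₊ < j := by
  rw [Int.le_floor, Nat.floor_lt (by positivity), mul_inv_lt_iff₀ hξ0, Int.cast_natCast]
  exact ⟨fun h => h.lt_of_ne ((hξ.natCast_mul hj.ne').ne_nat K).symm, le_of_lt⟩

lemma floor_mul_eq_iff_mem_Ioc {ξ : ℝ} (hξ : Irrational ξ) (hξ0 : 0 < ξ) (K : ℕ) {j : ℕ}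
    (hj : 0 < j) :
    ⌊(j : ℝ) * ξ⌋ = K ↔ j ∈ Ioc ⌊(K : ℝ) * ξ⁻¹⌋₊ ⌊((K + 1 : ℕ) : ℝ) * ξ⁻¹⌋₊ := by
  rw [mem_Ioc, ← le_floor_mul_iff_floor_mul_inv_lt hξ hξ0 K hj, ← not_lt (b := j),
    ← le_floor_mul_iff_floor_mul_inv_lt hξ hξ0 (K + 1) hj]
  push_cast
  omega

/-- The `k`-th run of the walk `S x⁻¹`, on which `⌊j x⁻¹⌋ = k`, has length `⌊(k+1) x⌋ - ⌊k x⌋`. -/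
noncomputable def alternatingRunSum (x : ℝ) (K : ℕ) : ℤ :=
  ∑ k ∈ range K, (-1) ^ k * ((⌊((k + 1 : ℕ) : ℝ) * x⌋₊ : ℤ) - ⌊(k : ℝ) * x⌋₊)

lemma S_floor_mul_inv {ξ : ℝ} (hξ : Irrational ξ) (hξ0 : 0 < ξ) (K : ℕ) :
    S ξ ⌊(K : ℝ) * ξ⁻¹⌋₊ = alternatingRunSum ξ⁻¹ K := by
  induction K with
  | zero => simp [S, alternatingRunSum]
  | succ K ih =>
    have hmono : ⌊(K : ℝ) * ξ⁻¹⌋₊ ≤ ⌊((K + 1 : ℕ) : ℝ) * ξ⁻¹⌋₊ :=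
      Nat.floor_le_floor (by gcongr; omega)
    rw [S_eq_add_of_floor_eq ξ hmono fun j hj =>
      (floor_mul_eq_iff_mem_Ioc hξ hξ0 K (pos_of_gt (mem_Ioc.1 hj).1)).2 hj, ih, alternatingRunSum,
      alternatingRunSum, sum_range_succ, Int.coe_negOnePow_natCast, Nat.cast_sub hmono]

lemma alternatingRunSum_add_natCast {x : ℝ} (hx : 0 ≤ x) (a t : ℕ) :
    alternatingRunSum (x + a) (2 * t) = alternatingRunSum x (2 * t) := by
  have hrun (k : ℕ) : (⌊((k + 1 : ℕ) : ℝ) * (x + a)⌋₊ : ℤ) - ⌊(k : ℝ) * (x + a)⌋₊ =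
      a + ((⌊((k + 1 : ℕ) : ℝ) * x⌋₊ : ℤ) - ⌊(k : ℝ) * x⌋₊) := by
    have hsplit (i : ℕ) : (i : ℝ) * (x + a) = i * x + ((i * a : ℕ) : ℝ) := by push_cast; ring
    rw [hsplit, hsplit, Nat.floor_add_natCast (by positivity),
      Nat.floor_add_natCast (by positivity)]
    push_cast
    ring
  induction t with
  | zero => simp [alternatingRunSum]
  | succ t ih =>
    simp only [alternatingRunSum, hrun, Nat.mul_succ, sum_range_succ] at ih ⊢
    rw [ih, pow_succ, (even_two_mul t).neg_one_pow]
    ring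

lemma S_floor_mul_inv_eq_S_inv {ξ c : ℝ} {a : ℕ} (hc : Irrational c) (hc0 : 0 < c)
    (hinv : ξ⁻¹ = a + c) (t : ℕ) :
    S ξ ⌊((2 * t : ℕ) : ℝ) * ξ⁻¹⌋₊ = S c⁻¹ ⌊((2 * t : ℕ) : ℝ) * c⌋₊ := by
  have hξ : Irrational ξ := by simpa [← hinv] using (hc.natCast_add a).inv
  have hξ0 : 0 < ξ := inv_pos.1 (hinv ▸ by positivity)
  have hrenorm := S_floor_mul_inv hc.inv (inv_pos.2 hc0) (2 * t)
  rw [inv_inv] at hrenorm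
  rw [S_floor_mul_inv hξ hξ0, hrenorm, hinv, add_comm, alternatingRunSum_add_natCast hc0.le]

lemma exists_S_floor_mul_inv_le {ξ : ℝ} (hξ : Irrational ξ) (hξ0 : 0 < ξ) (n : ℕ) :
    ∃ t : ℕ, (2 * t : ℝ) ≤ n * ξ + 1 ∧ S ξ ⌊((2 * t : ℕ) : ℝ) * ξ⁻¹⌋₊ ≤ S ξ n := by
  rcases n.eq_zero_or_pos with rfl | hn
  · exact ⟨0, by simp⟩
  obtain ⟨K, hK⟩ : ∃ K : ℕ, ⌊(n : ℝ) * ξ⌋ = K :=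
    ⟨_, (Int.natCast_floor_eq_floor (by positivity)).symm⟩
  have hKle : (K : ℝ) ≤ n * ξ := by exact_mod_cast hK ▸ Int.floor_le ((n : ℝ) * ξ)
  have hrun := (floor_mul_eq_iff_mem_Ioc hξ hξ0 K hn).1 hK
  have hfloor {j : ℕ} (hj : j ∈ Ioc ⌊(K : ℝ) * ξ⁻¹⌋₊ ⌊((K + 1 : ℕ) : ℝ) * ξ⁻¹⌋₊) :
      ⌊(j : ℝ) * ξ⌋ = K :=
    (floor_mul_eq_iff_mem_Ioc hξ hξ0 K (pos_of_gt (mem_Ioc.1 hj).1)).2 hj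
  rcases K.even_or_odd' with ⟨t, rfl | rfl⟩
  · -- `n` lies in an ascending run: compare with its start
    refine ⟨t, by push_cast at hKle; linarith, ?_⟩
    rw [S_eq_add_of_floor_eq ξ (mem_Ioc.1 hrun).1.le fun j hj =>
      hfloor (Ioc_subset_Ioc_right (mem_Ioc.1 hrun).2 hj)]
    rw [Int.negOnePow_even _ (by exact_mod_cast even_two_mul t)]
    push_cast
    omega
  · -- `n` lies in a descending run: compare with its end
    refine ⟨t + 1, by push_cast at hKle ⊢; linarith, ?_⟩
    rw [show 2 * (t + 1) = 2 * t + 1 + 1 by ring, S_eq_add_of_floor_eq ξ (mem_Ioc.1 hrun).2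
      fun j hj => hfloor (Ioc_subset_Ioc_left (mem_Ioc.1 hrun).1.le hj)]
    rw [Int.negOnePow_odd _ (by exact_mod_cast odd_two_mul_add_one t)]
    push_cast
    omega

theorem S_nonneg_of_inv_eq {ξ : ℝ} {a : ℕ} (ha : 0 < a) (hξ : Irrational ξ) (hξ0 : 0 < ξ)
    (hinv : ξ⁻¹ = a + ξ / 4) (n : ℕ) : 0 ≤ S ξ n := by
  have hξ1 : ξ < 1 := by
    have : (1 : ℝ) ≤ a := by exact_mod_cast ha
    exact (one_lt_inv₀ hξ0).1 (by rw [hinv]; linarith)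
  have hc : Irrational (ξ / 4) := hξ.div_natCast (by norm_num)
  -- `(ξ / 4)⁻¹ ≡ ξ mod 2`, so renormalising brings the walk back to itself
  have hc_inv : (ξ / 4)⁻¹ = ξ + 2 * ((2 * a : ℤ) : ℝ) := by
    rw [inv_div, div_eq_mul_inv, hinv]
    push_cast
    ring
  induction n using Nat.strong_induction_on with
  | _ n ih =>
    rcases n.eq_zero_or_pos with rfl | hn
    · simp [S]
    obtain ⟨t, ht, hle⟩ := exists_S_floor_mul_inv_le hξ hξ0 n
    rw [S_floor_mul_inv_eq_S_inv hc (by positivity) hinv, hc_inv, S_add_two_mul_intCast] at hle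
    refine (ih _ ?_).trans hle
    rw [Nat.floor_lt (by positivity)]
    have : (1 : ℝ) ≤ n := by exact_mod_cast hn
    push_cast
    nlinarith

theorem stmt_19 (m : ℕ) (hm : 0 < m) (hme : Even m) (n : ℕ) :
    0 ≤ S (2 * ((Real.sqrt ((m : ℝ) ^ 2 + 4) - (m : ℝ)) / 2)) n := by
  obtain ⟨a, rfl⟩ := hme
  set s := Real.sqrt (((a + a : ℕ) : ℝ) ^ 2 + 4)
  have hs2 : s ^ 2 = ((a + a : ℕ) : ℝ) ^ 2 + 4 := Real.sq_sqrt (by positivity)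
  have hs0 : 0 ≤ s := Real.sqrt_nonneg _
  have hξ : 2 * ((s - (a + a : ℕ)) / 2) = s - (a + a : ℕ) := by ring
  have hirr : Irrational s := by
    have hsq : ¬IsSquare ((a + a) ^ 2 + 4) := by
      rintro ⟨r, hr⟩
      have hr_gt : a + a + 1 ≤ r := by nlinarith
      have : 4 * a ≤ 3 := by nlinarith [Nat.mul_le_mul hr_gt hr_gt]
      omega
    simpa [s] using irrational_sqrt_natCast_iff.2 hsq
  rw [hξ]
  refine S_nonneg_of_inv_eq (a := a) (by omega) (hirr.sub_natCast _) (by nlinarith) ?_ n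
  rw [inv_eq_of_mul_eq_one_right]
  push_cast at hs2 ⊢
  linear_combination hs2 / 4
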